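/- arXiv:2106.14963 — 2 statements merged into one kernel-verified Lean document; each statement's English description precedes it below -/
import Mathlib

section
/- For every positive integer k and every natural number n, S₁(n)^k = (1/2^{k−1}) Σ_{j=0}^{⌊(k−1)/2⌋} C(k, 2j+1) S_{2k−1−2j}(n), where S_m(n) = Σ_{i=1}^n i^m. -/
def S (k n : ℕ) : ℚ := ∑ i ∈ Finset.Icc 1 n, (i : ℚ)^k

lemma sum_odd_aux (f : ℕ → ℚ) (hf : ∀ m, Even m → f m = 0) (N : ℕ) :
    ∑ m ∈ Finset.range N, f m = ∑ j ∈ Finset.range (N/2), f (2*j+1) := by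
  induction N with
  | zero => simp
  | succ N ih =>
    rw [Finset.sum_range_succ, ih]
    rcases Nat.even_or_odd N with he | ho
    · rw [hf N he]
      have h : (N+1)/2 = N/2 := by obtain ⟨t, ht⟩ := he; omega
      rw [h, add_zero]
    · obtain ⟨t, ht⟩ := ho
      have h1 : (N+1)/2 = N/2 + 1 := by omega
      have h2 : 2*(N/2)+1 = N := by omega
      rw [h1, Finset.sum_range_succ, h2]

lemma binom_odd (x y : ℚ) (k : ℕ) :
    (x+y)^k - (x-y)^k = ∑ j ∈ Finset.range ((k+1)/2),
      2 * (Nat.choose k (2*j+1)) * x^(k-(2*j+1)) * y^(2*j+1) := by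
  have h1 : (x+y)^k = ∑ m ∈ Finset.range (k+1), x^(k-m) * (y^m) * (Nat.choose k m) := by
    rw [add_comm x y, add_pow]
    exact Finset.sum_congr rfl (fun m _ => by ring)
  have h2 : (x-y)^k = ∑ m ∈ Finset.range (k+1), x^(k-m) * ((-y)^m) * (Nat.choose k m) := by
    rw [sub_eq_add_neg, add_comm x (-y), add_pow]
    exact Finset.sum_congr rfl (fun m _ => by ring)
  rw [h1, h2, ← Finset.sum_sub_distrib]
  rw [sum_odd_aux (fun m => x^(k-m) * (y^m) * (Nat.choose k m)
      - x^(k-m) * ((-y)^m) * (Nat.choose k m))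
    (fun m hm => by rw [hm.neg_pow]; ring)]
  refine Finset.sum_congr rfl (fun j _ => ?_)
  have ho : Odd (2*j+1) := ⟨j, by ring⟩
  rw [ho.neg_pow]
  ring

lemma S_one (n : ℕ) : S 1 n = (n * (n+1)) / 2 := by
  induction n with
  | zero => simp [S]
  | succ n ih =>
    rw [S, Finset.sum_Icc_succ_top (by omega), ← S, ih]
    push_cast
    ring

lemma S_eq_range (k n : ℕ) : S k n = ∑ i ∈ Finset.range n, ((i:ℚ)+1)^k := by
  induction n with
  | zero => simp [S]
  | succ n ih =>
    rw [S, Finset.sum_Icc_succ_top (by omega), ← S, ih, Finset.sum_range_succ]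
    push_cast
    ring

lemma step_lemma (k m : ℕ) (hk : 0 < k) :
    (S 1 (m+1))^k - (S 1 m)^k = (1/2^(k-1)) * ∑ j ∈ Finset.range ((k-1)/2+1),
      (Nat.choose k (2*j+1)) * ((m:ℚ)+1)^(2*k-1-2*j) := by
  set y : ℚ := (m:ℚ)+1 with hy
  have hS1 : S 1 (m+1) = (y^2+y)/2 := by rw [S_one]; push_cast; ring
  have hS0 : S 1 m = (y^2-y)/2 := by rw [S_one]; ring
  rw [hS1, hS0, div_pow, div_pow, div_sub_div_same, binom_odd]
  have hr : (k+1)/2 = (k-1)/2+1 := by omega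
  rw [hr, Finset.sum_div, Finset.mul_sum]
  refine Finset.sum_congr rfl (fun j hj => ?_)
  have hj' : 2*j+1 ≤ k := by
    simp only [Finset.mem_range] at hj; omega
  have hpow : (y^2)^(k-(2*j+1)) * y^(2*j+1) = y^(2*k-1-2*j) := by
    rw [← pow_mul, ← pow_add]; congr 1; omega
  have h2 : (2:ℚ)^k = 2 * 2^(k-1) := by
    rw [← pow_succ']; congr 1; omega
  rw [mul_assoc, hpow, h2]
  have : (2:ℚ)^(k-1) ≠ 0 := by positivity
  field_simp

theorem stmt_14 (k : ℕ) (hk : 0 < k) (n : ℕ) :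
    (S 1 n)^k =
      (1 / 2^(k - 1)) * ∑ j ∈ Finset.range ((k - 1) / 2 + 1),
        (Nat.choose k (2 * j + 1)) * S (2 * k - 1 - 2 * j) n := by
  have tel : (S 1 n)^k = ∑ i ∈ Finset.range n, ((S 1 (i+1))^k - (S 1 i)^k) := by
    rw [Finset.sum_range_sub (fun i => (S 1 i)^k)]
    have h0 : S 1 0 = 0 := by simp [S]
    rw [h0, zero_pow hk.ne', sub_zero]
  rw [tel]
  rw [Finset.sum_congr rfl (fun i _ => step_lemma k i hk), ← Finset.mul_sum,
    Finset.sum_comm]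
  congr 1
  refine Finset.sum_congr rfl (fun j _ => ?_)
  rw [S_eq_range, Finset.mul_sum]
end

section
/- For every positive integer k and every natural number n, S₂(n)·S₁(n)^k = (1/(3·2^k)) Σ_{j=0}^{⌊(k+1)/2⌋} ((2k+3−2j)/(2j+1)) C(k+1, 2j) S_{2k+2−2j}(n), where S_m(n) = Σ_{i=1}^n i^m. -/
lemma Ssucc (m n : ℕ) : S m (n+1) = S m n + ((n:ℚ)+1)^m := by
  unfold S
  rw [Finset.sum_Icc_succ_top (by omega : 1 ≤ n+1)]
  push_cast
  ring

lemma hS1' (n : ℕ) : S 1 n = ((n:ℚ)+1)*(((n:ℚ)+1)-1)/2 := by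
  induction n with
  | zero => simp [S]
  | succ n ih => rw [Ssucc, ih]; push_cast; ring

lemma hS2' (n : ℕ) : S 2 n = ((n:ℚ)+1)*(((n:ℚ)+1)-1)*(2*((n:ℚ)+1)-1)/6 := by
  induction n with
  | zero => simp [S]
  | succ n ih => rw [Ssucc, ih]; push_cast; ring

lemma pairsum (g : ℕ → ℚ) (m : ℕ) :
    ∑ i ∈ Finset.range (2*m), g i = ∑ j ∈ Finset.range m, (g (2*j) + g (2*j+1)) := by
  induction m with
  | zero => simp
  | succ m ih =>
      rw [Nat.mul_succ, Finset.sum_range_succ, Finset.sum_range_succ, Finset.sum_range_succ, ih]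
      ring

lemma key (k : ℕ) (x : ℚ) :
    (x+1)^(k+1)*(2*x+1) - (x-1)^(k+1)*(2*x-1)
      = ∑ j ∈ Finset.range ((k+1)/2+1),
          2*((Nat.choose (k+1) (2*j) : ℚ) + 2*(Nat.choose (k+1) (2*j+1))) * x^(k+1-2*j) := by
  have hexp : (x+1)^(k+1)*(2*x+1) - (x-1)^(k+1)*(2*x-1)
      = ∑ i ∈ Finset.range (k+2),
          (Nat.choose (k+1) i : ℚ) * x^(k+1-i) * ((2*x+1) - (-1)^i*(2*x-1)) := by
    have h1 : (x+1)^(k+1)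
        = ∑ i ∈ Finset.range (k+2), (1:ℚ)^i * x^(k+1-i) * Nat.choose (k+1) i := by
      rw [show x+1 = 1+x from by ring, add_pow]
    have h2 : (x-1)^(k+1)
        = ∑ i ∈ Finset.range (k+2), (-1:ℚ)^i * x^(k+1-i) * Nat.choose (k+1) i := by
      rw [show x-1 = (-1)+x from by ring, add_pow]
    rw [h1, h2, Finset.sum_mul, Finset.sum_mul, ← Finset.sum_sub_distrib]
    refine Finset.sum_congr rfl fun i _ => by ring
  rw [hexp]
  have hsub : Finset.range (k+2) ⊆ Finset.range (2*((k+1)/2+1)) := by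
    apply Finset.range_subset_range.2; omega
  rw [Finset.sum_subset hsub (by
    intro i _ hi
    have hlt : k+1 < i := by
      simp only [Finset.mem_range] at hi; omega
    rw [Nat.choose_eq_zero_of_lt hlt]
    simp)]
  rw [pairsum]
  refine Finset.sum_congr rfl fun j hj => ?_
  have heven : ((-1:ℚ))^(2*j) = 1 := by rw [pow_mul]; norm_num
  have hodd : ((-1:ℚ))^(2*j+1) = -1 := by rw [pow_succ, heven]; ring
  rw [heven, hodd]
  by_cases h : 2*j ≤ k
  · rw [show k+1-2*j = (k+1-(2*j+1))+1 from by omega]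
    ring
  · have hc0 : Nat.choose (k+1) (2*j+1) = 0 := Nat.choose_eq_zero_of_lt (by omega)
    rw [show k+1-2*j = 0 from by omega, show k+1-(2*j+1) = 0 from by omega, hc0]
    push_cast
    ring

lemma diff (k : ℕ) (a : ℚ) :
    (a*(a-1)*(2*a-1)/6 + a^2) * (a*(a-1)/2 + a)^k
      = a*(a-1)*(2*a-1)/6 * (a*(a-1)/2)^k
        + (1 / (3 * 2^k)) * ∑ j ∈ Finset.range ((k + 1) / 2 + 1),
            ((2 * k + 3 - 2 * j : ℚ) / (2 * j + 1)) * (Nat.choose (k + 1) (2 * j))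
              * a^(2*k+2-2*j) := by
  have h2k : (2:ℚ)^k ≠ 0 := pow_ne_zero _ two_ne_zero
  have hterm : ∀ j ∈ Finset.range ((k+1)/2+1),
      (1 / (3 * 2^k)) * (((2 * k + 3 - 2 * j : ℚ) / (2 * j + 1)) * (Nat.choose (k + 1) (2 * j))
          * a^(2*k+2-2*j))
        = a^(k+1)/(6*2^k) * (2*((Nat.choose (k+1) (2*j) : ℚ)
            + 2*(Nat.choose (k+1) (2*j+1))) * a^(k+1-2*j)) := by
    intro j hj
    have h2j : 2*j ≤ k+1 := by
      have := Finset.mem_range.mp hj; omega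
    have hpow : a^(2*k+2-2*j) = a^(k+1) * a^(k+1-2*j) := by
      rw [← pow_add]; congr 1; omega
    have hC : (Nat.choose (k+1) (2*j+1) : ℚ) * (2*(j:ℚ)+1)
        = (Nat.choose (k+1) (2*j) : ℚ) * ((k:ℚ)+1-2*j) := by
      have h := Nat.choose_succ_right_eq (k+1) (2*j)
      have h' := congrArg (fun t : ℕ => (t:ℚ)) h
      push_cast [Nat.cast_sub h2j] at h'
      linarith [h']
    have hne : ((2*(j:ℚ))+1) ≠ 0 := by positivity
    have hcoef : ((2 * k + 3 - 2 * j : ℚ) / (2 * j + 1)) * (Nat.choose (k + 1) (2 * j))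
        = (Nat.choose (k+1) (2*j) : ℚ) + 2*(Nat.choose (k+1) (2*j+1)) := by
      rw [div_mul_eq_mul_div, div_eq_iff hne]
      linear_combination (-2)*hC
    rw [hpow, hcoef]
    field_simp
    ring
  have e1 : a*(a-1)/2 + a = a*(a+1)/2 := by ring
  have e2 : (a*(a+1)/2)^k = a^k*(a+1)^k/2^k := by rw [div_pow, mul_pow]
  have e3 : (a*(a-1)/2)^k = a^k*(a-1)^k/2^k := by rw [div_pow, mul_pow]
  rw [e1, e2, e3, Finset.mul_sum, Finset.sum_congr rfl hterm, ← Finset.mul_sum, ← key k a]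
  field_simp
  ring

theorem stmt_15 (k : ℕ) (hk : 0 < k) (n : ℕ) :
    S 2 n * (S 1 n)^k =
      (1 / (3 * 2^k)) * ∑ j ∈ Finset.range ((k + 1) / 2 + 1),
        ((2 * k + 3 - 2 * j : ℚ) / (2 * j + 1)) * (Nat.choose (k + 1) (2 * j))
          * S (2 * k + 2 - 2 * j) n := by
  induction n with
  | zero => simp [S]
  | succ n ih =>
      simp only [Ssucc, pow_one]
      simp only [mul_add, Finset.sum_add_distrib]
      rw [← ih, hS1' n, hS2' n]
      exact diff k ((n:ℚ)+1)
end
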